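/- arXiv:1901.00017 — 3 statements merged into one kernel-verified Lean document; each statement's English description precedes it below -/
import Mathlib

section
/- Let φ : [1,∞) → ℝ be measurable with ‖φ‖_∞ ≤ M. For r ≥ 1 and t > 0 define (S₁(t)φ)(r) = (1/(r√(4πt))) ∫₁^∞ (e^{-(r-ρ)²/(4t)} − e^{-(r+ρ-2)²/(4t)}) ρ φ(ρ) dρ. Then |(S₁(t)φ)(r)| ≤ (1 − (2/(r√π)) ∫_{(r-1)/(2√t)}^∞ e^{-z²} dz) · M for every r ≥ 1 and t > 0; in particular |(S₁(t)φ)(r)| ≤ M. -/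
open Real MeasureTheory

/-- The radially symmetric Dirichlet heat semigroup on ℝ³ \ B₁(0). -/
noncomputable def S1 (φ : ℝ → ℝ) (t r : ℝ) : ℝ :=
  (1 / (r * Real.sqrt (4 * π * t))) *
    ∫ ρ in Set.Ioi (1:ℝ),
      (Real.exp (-(r - ρ) ^ 2 / (4 * t)) - Real.exp (-(r + ρ - 2) ^ 2 / (4 * t))) * (ρ * φ ρ)

/-!
For `r, ρ ≥ 1` the kernel `e^{-(r-ρ)²/4t} - e^{-(r+ρ-2)²/4t}` is nonnegative, so `|S₁(t)φ(r)|` is at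
most `M / (r√(4πt))` times the integral of the kernel against `ρ`. That integral is explicit:
writing `ρ = (ρ - c) + c` in each Gaussian centred at `c`, the two boundary terms
`2t e^{-(r-1)²/4t}` cancel, and what remains is `r` times the total Gaussian mass `√(4πt)` minus
twice the mass of the image Gaussian on `(1, ∞)`, which is `2√t ∫_{(r-1)/2√t}^∞ e^{-z²} dz`.
-/

open Set Filter Topology

section Translation

variable {E : Type*} [NormedAddCommGroup E] [NormedSpace ℝ E]

theorem integral_Ioi_comp_sub_right (g : ℝ → E) (a c : ℝ) :
    ∫ x in Ioi a, g (x - c) = ∫ x in Ioi (a - c), g x := by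
  simpa [preimage_sub_const_Ioi] using
    (measurePreserving_sub_right volume c).setIntegral_preimage_emb
      (measurableEmbedding_subRight c) g (Ioi (a - c))

theorem integral_Ioi_comp_const_sub (g : ℝ → E) (a c : ℝ) :
    ∫ x in Ioi (c - a), g (c - x) = ∫ x in Iio a, g x := by
  simpa [preimage_const_sub_Iio] using
    (Measure.measurePreserving_sub_left volume c).setIntegral_preimage_emb
      (MeasurableEquiv.subLeft c).measurableEmbedding g (Iio a)

end Translation

section Gaussian

variable {t : ℝ}

theorem integrable_exp_neg_sq_sub_div (ht : 0 < t) (c : ℝ) :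
    Integrable fun x : ℝ => exp (-(x - c) ^ 2 / (4 * t)) := by
  simpa [neg_div, div_eq_inv_mul] using
    (integrable_exp_neg_mul_sq (b := (4 * t)⁻¹) (by positivity)).comp_sub_right c

theorem integrable_sub_mul_exp_neg_sq_sub_div (ht : 0 < t) (c : ℝ) :
    Integrable fun x : ℝ => (x - c) * exp (-(x - c) ^ 2 / (4 * t)) := by
  simpa [neg_div, div_eq_inv_mul] using
    (integrable_mul_exp_neg_mul_sq (b := (4 * t)⁻¹) (by positivity)).comp_sub_right c

theorem integrable_mul_exp_neg_sq_sub_div (ht : 0 < t) (c : ℝ) :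
    Integrable fun x : ℝ => x * exp (-(x - c) ^ 2 / (4 * t)) := by
  refine ((integrable_sub_mul_exp_neg_sq_sub_div ht c).add
    ((integrable_exp_neg_sq_sub_div ht c).const_mul c)).congr (ae_of_all _ fun x => ?_)
  simp only [Pi.add_apply]
  ring

theorem integral_exp_neg_sq_sub_div (c : ℝ) :
    ∫ x : ℝ, exp (-(x - c) ^ 2 / (4 * t)) = √(4 * π * t) := by
  rw [integral_sub_right_eq_self (fun x : ℝ => exp (-x ^ 2 / (4 * t))) c]
  simp_rw [neg_div, div_eq_inv_mul, ← neg_mul]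
  rw [integral_gaussian, div_inv_eq_mul]
  ring_nf

theorem integral_Ioi_exp_neg_sq_sub_div (ht : 0 < t) (a c : ℝ) :
    ∫ x in Ioi a, exp (-(x - c) ^ 2 / (4 * t))
      = 2 * √t * ∫ z in Ioi ((a - c) / (2 * √t)), exp (-z ^ 2) := by
  have hb : 0 < (2 * √t)⁻¹ := by positivity
  have hscale : ∀ y : ℝ, exp (-y ^ 2 / (4 * t)) = exp (-((2 * √t)⁻¹ * y) ^ 2) := fun y => by
    rw [mul_pow, inv_pow, mul_pow, sq_sqrt ht.le]
    ring_nf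
  simp_rw [hscale]
  rw [integral_Ioi_comp_sub_right (fun y => exp (-((2 * √t)⁻¹ * y) ^ 2)),
    integral_comp_mul_left_Ioi (fun z => exp (-z ^ 2)) _ hb, smul_eq_mul, inv_inv,
    inv_mul_eq_div]

theorem hasDerivAt_neg_mul_exp_neg_sq_sub_div (ht : 0 < t) (c x : ℝ) :
    HasDerivAt (fun y => -(2 * t) * exp (-(y - c) ^ 2 / (4 * t)))
      ((x - c) * exp (-(x - c) ^ 2 / (4 * t))) x := by
  have h : HasDerivAt (fun y : ℝ => -(y - c) ^ 2 / (4 * t)) (-(2 * (x - c) ^ 1 * 1) / (4 * t)) x :=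
    (((hasDerivAt_id x).sub_const c).pow 2).neg.div_const (4 * t)
  refine (h.exp.const_mul (-(2 * t))).congr_deriv ?_
  field_simp
  ring

theorem integral_Ioi_mul_exp_neg_sq_sub_div (ht : 0 < t) (a c : ℝ) :
    ∫ x in Ioi a, x * exp (-(x - c) ^ 2 / (4 * t))
      = 2 * t * exp (-(a - c) ^ 2 / (4 * t)) + c * ∫ x in Ioi a, exp (-(x - c) ^ 2 / (4 * t)) := by
  have hlim : Tendsto (fun x : ℝ => -(2 * t) * exp (-(x - c) ^ 2 / (4 * t))) atTop (𝓝 0) := by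
    have hsq : Tendsto (fun x : ℝ => (x - c) ^ 2 / (4 * t)) atTop atTop :=
      ((tendsto_pow_atTop two_ne_zero).comp (tendsto_atTop_add_const_right _ (-c) tendsto_id)
        ).atTop_div_const (by positivity)
    simpa [neg_div] using
      (tendsto_exp_atBot.comp (tendsto_neg_atTop_atBot.comp hsq)).const_mul (-(2 * t))
  have hfirst := integral_Ioi_of_hasDerivAt_of_tendsto' (a := a)
    (fun x _ => hasDerivAt_neg_mul_exp_neg_sq_sub_div ht c x)
    (integrable_sub_mul_exp_neg_sq_sub_div ht c).integrableOn hlim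
  calc ∫ x in Ioi a, x * exp (-(x - c) ^ 2 / (4 * t))
      = ∫ x in Ioi a,
          ((x - c) * exp (-(x - c) ^ 2 / (4 * t)) + c * exp (-(x - c) ^ 2 / (4 * t))) := by
        congr 1 with x; ring
    _ = _ := by
        rw [integral_add (integrable_sub_mul_exp_neg_sq_sub_div ht c).integrableOn
          ((integrable_exp_neg_sq_sub_div ht c).const_mul c).integrableOn, hfirst,
          integral_const_mul]
        ring

end Gaussian

section HalfLine

variable {t : ℝ}

theorem integral_Ioi_add_integral_Ioi_reflect (ht : 0 < t) (a c : ℝ) :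
    (∫ x in Ioi a, exp (-(x - c) ^ 2 / (4 * t)))
      + ∫ x in Ioi a, exp (-(x - (2 * a - c)) ^ 2 / (4 * t)) = √(4 * π * t) := by
  have hrefl := integral_Ioi_comp_const_sub (fun x => exp (-(x - c) ^ 2 / (4 * t))) a (2 * a)
  rw [show 2 * a - a = a by ring] at hrefl
  have hint := (integrable_exp_neg_sq_sub_div ht c).integrableOn (s := Iio a)
  have hreflected : ∫ x in Ioi a, exp (-(x - (2 * a - c)) ^ 2 / (4 * t))
      = ∫ x in Iio a, exp (-(x - c) ^ 2 / (4 * t)) := by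
    rw [← hrefl]
    congr 1 with x
    ring_nf
  rw [hreflected, add_comm, ← integral_Ici_eq_integral_Ioi,
    intervalIntegral.integral_Iio_add_Ici hint (integrable_exp_neg_sq_sub_div ht c).integrableOn,
    integral_exp_neg_sq_sub_div]

/-- Method of images: the Dirichlet heat kernel of `∂ₜ - ∂ᵣ²` on `[1, ∞)`, without the factor
`(4πt)^(-1/2)`. -/
noncomputable def halfLineHeatKernel (t r ρ : ℝ) : ℝ :=
  exp (-(r - ρ) ^ 2 / (4 * t)) - exp (-(r + ρ - 2) ^ 2 / (4 * t))

theorem halfLineHeatKernel_eq (t r ρ : ℝ) :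
    halfLineHeatKernel t r ρ
      = exp (-(ρ - r) ^ 2 / (4 * t)) - exp (-(ρ - (2 - r)) ^ 2 / (4 * t)) := by
  unfold halfLineHeatKernel
  ring_nf

theorem halfLineHeatKernel_nonneg (ht : 0 ≤ t) {r ρ : ℝ} (hr : 1 ≤ r) (hρ : 1 ≤ ρ) :
    0 ≤ halfLineHeatKernel t r ρ := by
  refine sub_nonneg.2 (exp_le_exp.2 (div_le_div_of_nonneg_right ?_ (by positivity)))
  nlinarith [mul_nonneg (sub_nonneg.2 hr) (sub_nonneg.2 hρ)]

theorem integrable_halfLineHeatKernel_mul_self (ht : 0 < t) (r : ℝ) :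
    Integrable fun ρ => halfLineHeatKernel t r ρ * ρ := by
  refine ((integrable_mul_exp_neg_sq_sub_div ht r).sub
    (integrable_mul_exp_neg_sq_sub_div ht (2 - r))).congr (ae_of_all _ fun ρ => ?_)
  simp only [Pi.sub_apply, halfLineHeatKernel_eq]
  ring

theorem integral_Ioi_one_halfLineHeatKernel_mul_self (ht : 0 < t) (r : ℝ) :
    ∫ ρ in Ioi 1, halfLineHeatKernel t r ρ * ρ
      = r * √(4 * π * t) - 4 * √t * ∫ z in Ioi ((r - 1) / (2 * √t)), exp (-z ^ 2) := by
  have hmass := integral_Ioi_add_integral_Ioi_reflect ht 1 r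
  rw [mul_one] at hmass
  have hB := integral_Ioi_exp_neg_sq_sub_div ht 1 (2 - r)
  have hbdry : 1 - (2 - r) = r - 1 := by ring
  have hsplit : ∫ ρ in Ioi 1, halfLineHeatKernel t r ρ * ρ
      = (∫ ρ in Ioi 1, ρ * exp (-(ρ - r) ^ 2 / (4 * t)))
        - ∫ ρ in Ioi 1, ρ * exp (-(ρ - (2 - r)) ^ 2 / (4 * t)) := by
    rw [← integral_sub (integrable_mul_exp_neg_sq_sub_div ht _).integrableOn
      (integrable_mul_exp_neg_sq_sub_div ht _).integrableOn]
    congr 1 with ρ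
    rw [halfLineHeatKernel_eq]
    ring
  rw [hbdry] at hB
  rw [hsplit, integral_Ioi_mul_exp_neg_sq_sub_div ht, integral_Ioi_mul_exp_neg_sq_sub_div ht, hbdry,
    ← neg_sub r 1, neg_sq]
  rw [hB] at hmass ⊢
  linear_combination r * hmass

end HalfLine

theorem abs_S1_le (φ : ℝ → ℝ) (M : ℝ) (hφ : ∀ ρ, 1 ≤ ρ → |φ ρ| ≤ M) {r t : ℝ} (hr : 1 ≤ r)
    (ht : 0 < t) :
    |S1 φ t r| ≤ 1 / (r * √(4 * π * t)) * ((∫ ρ in Ioi 1, halfLineHeatKernel t r ρ * ρ) * M) := by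
  have hr0 : 0 < r := by linarith
  have hpref : 0 ≤ 1 / (r * √(4 * π * t)) := by positivity
  rw [S1, abs_mul, abs_of_nonneg hpref, ← integral_mul_const M]
  gcongr
  rw [← norm_eq_abs]
  refine norm_integral_le_of_norm_le
    ((integrable_halfLineHeatKernel_mul_self ht r).integrableOn.mul_const M)
    (ae_restrict_of_forall_mem measurableSet_Ioi fun ρ (hρ : 1 < ρ) => ?_)
  change ‖halfLineHeatKernel t r ρ * (ρ * φ ρ)‖ ≤ halfLineHeatKernel t r ρ * ρ * M
  rw [norm_mul, norm_mul, norm_of_nonneg (halfLineHeatKernel_nonneg ht.le hr hρ.le),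
    norm_of_nonneg (by linarith : 0 ≤ ρ), mul_assoc]
  gcongr
  · exact halfLineHeatKernel_nonneg ht.le hr hρ.le
  · exact hφ ρ hρ.le

theorem sqrt_four_mul_pi_mul (t : ℝ) : √(4 * π * t) = 2 * √π * √t := by
  rw [sqrt_mul (by positivity), sqrt_mul (by norm_num), show (4 : ℝ) = 2 ^ 2 by norm_num,
    sqrt_sq zero_le_two]

theorem stmt_6_general (φ : ℝ → ℝ) (M : ℝ)
    (hφ : ∀ ρ, 1 ≤ ρ → |φ ρ| ≤ M) :
    ∀ r t : ℝ, 1 ≤ r → 0 < t →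
      |S1 φ t r| ≤
          (1 - (2 / (r * Real.sqrt π)) *
            ∫ z in Set.Ioi ((r - 1) / (2 * Real.sqrt t)), Real.exp (-z ^ 2)) * M
        ∧ |S1 φ t r| ≤ M := by
  intro r t hr ht
  have hM : 0 ≤ M := (abs_nonneg _).trans (hφ 1 le_rfl)
  set J := ∫ z in Ioi ((r - 1) / (2 * √t)), exp (-z ^ 2)
  have hJ : 0 ≤ J := setIntegral_nonneg measurableSet_Ioi fun z _ => (exp_pos _).le
  have hbound : |S1 φ t r| ≤ (1 - 2 / (r * √π) * J) * M := by
    refine (abs_S1_le φ M hφ hr ht).trans_eq ?_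
    have hr0 : 0 < r := by linarith
    have hst : 0 < √t := sqrt_pos.2 ht
    rw [integral_Ioi_one_halfLineHeatKernel_mul_self ht, sqrt_four_mul_pi_mul]
    field_simp
    ring
  exact ⟨hbound, hbound.trans (mul_le_of_le_one_left hM (sub_le_self _ (by positivity)))⟩

theorem stmt_6 (φ : ℝ → ℝ) (hφm : Measurable φ) (M : ℝ)
    (hφ : ∀ ρ, 1 ≤ ρ → |φ ρ| ≤ M) :
    ∀ r t : ℝ, 1 ≤ r → 0 < t →
      |S1 φ t r| ≤
          (1 - (2 / (r * Real.sqrt π)) *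
            ∫ z in Set.Ioi ((r - 1) / (2 * Real.sqrt t)), Real.exp (-z ^ 2)) * M
        ∧ |S1 φ t r| ≤ M :=
  stmt_6_general φ M hφ
end

section
/- Let φ : [1,∞) → ℝ with sup_{ρ≥1}|ρφ(ρ)| ≤ K, and let S₁(t)φ be as in the exterior-ball Dirichlet heat semigroup representation. Then the radial derivative satisfies |∂_r (S₁(t)φ)(r)| ≤ 2K/√(πt) for every r ≥ 1 and t > 0. -/
/-!
Write `S₁(t)φ(r) = (r √(4πt))⁻¹ ∫_{ρ>1} k(r,ρ) ρφ(ρ) dρ` with the method-of-images kernel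
`k(r,ρ) = G(r-ρ) - G(r+ρ-2)`, `G(u) = exp(-u²/(4t))`. Since `G(u) ≤ e^{1/(4t)} exp(-v²/(8t))`
whenever `|u - v| ≤ 1`, dominated convergence lets us differentiate under the integral:
`∂ᵣ S₁φ = -S₁φ/r + (r √(4πt))⁻¹ ∫ ∂ᵣk · ρφ`. As `∫_ℝ |u| G(u) du = 4t`, the last integral is at
most `4K`. For `r, ρ ≥ 1` the kernel is nonnegative and `∫_{ρ>1} k = ∫_{1-r}^{r-1} G ≤ 2(r-1)`, so
`|S₁φ(r)| ≤ K(r-1)/(r√(πt))`. Altogether `|∂ᵣ S₁φ| ≤ (K/√(πt)) ((r-1)/r² + 2/r) ≤ 2K/√(πt)`,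
the last step being `(2r-1)(r-1) ≥ 0`.
-/

open Real MeasureTheory

open Set Filter

lemma integral_Ioi_comp_sub {E : Type*} [NormedAddCommGroup E] [NormedSpace ℝ E] (f : ℝ → E)
    (a c : ℝ) : ∫ ρ in Ioi a, f (ρ - c) = ∫ u in Ioi (a - c), f u := by
  have := (measurePreserving_sub_right volume c).setIntegral_preimage_emb
    (MeasurableEquiv.subRight c).measurableEmbedding f (Ioi (a - c))
  rwa [preimage_sub_const_Ioi, sub_add_cancel] at this

lemma MeasureTheory.Integrable.comp_add_sub {E : Type*} [NormedAddCommGroup E] {f : ℝ → E}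
    (hf : Integrable f) (x c : ℝ) : Integrable fun ρ => f (x + ρ - c) :=
  (hf.comp_add_right (x - c)).congr (ae_of_all _ fun ρ => by ring_nf)

lemma integral_comp_add_sub {E : Type*} [NormedAddCommGroup E] [NormedSpace ℝ E] (f : ℝ → E)
    (x c : ℝ) : ∫ ρ, f (x + ρ - c) = ∫ u, f u := by
  simpa only [add_sub_assoc, add_comm x] using integral_add_right_eq_self f (x - c)

noncomputable def gaussKernel (t u : ℝ) : ℝ := rexp (-u ^ 2 / (4 * t))

section gaussKernel

variable {t u v : ℝ}

lemma gaussKernel_pos (t u : ℝ) : 0 < gaussKernel t u := exp_pos _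

lemma gaussKernel_le_one (ht : 0 ≤ t) (u : ℝ) : gaussKernel t u ≤ 1 :=
  exp_le_one_iff.2 (div_nonpos_of_nonpos_of_nonneg (by nlinarith [sq_nonneg u]) (by positivity))

lemma gaussKernel_le_of_sq_le (ht : 0 ≤ t) (h : u ^ 2 ≤ v ^ 2) :
    gaussKernel t v ≤ gaussKernel t u := by
  unfold gaussKernel
  gcongr

lemma gaussKernel_neg (t u : ℝ) : gaussKernel t (-u) = gaussKernel t u := by
  simp [gaussKernel]

lemma gaussKernel_le_of_abs_sub_le (ht : 0 < t) (h : |u - v| ≤ 1) :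
    gaussKernel t u ≤ rexp (1 / (4 * t)) * gaussKernel (2 * t) v := by
  have hv : v ^ 2 ≤ 2 * u ^ 2 + 2 := by
    nlinarith [sq_nonneg (u + (u - v)), sq_abs (u - v), abs_nonneg (u - v)]
  rw [gaussKernel, gaussKernel, ← exp_add]
  gcongr
  rw [div_add_div _ _ (by positivity) (by positivity),
    div_le_div_iff₀ (by positivity) (by positivity)]
  nlinarith [mul_pos ht ht]

lemma hasDerivAt_gaussKernel (t u : ℝ) :
    HasDerivAt (gaussKernel t) (-(u / (2 * t)) * gaussKernel t u) u := by
  have := ((hasDerivAt_pow 2 u).neg.div_const (4 * t)).exp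
  convert this using 1
  · ext; simp [gaussKernel]
  · simp only [gaussKernel, Pi.neg_apply]; ring

lemma integrable_gaussKernel (ht : 0 < t) : Integrable (gaussKernel t) := by
  convert integrable_exp_neg_mul_sq (b := 1 / (4 * t)) (by positivity) using 2
  simp only [gaussKernel]; ring_nf

lemma integrable_abs_mul_gaussKernel (ht : 0 < t) :
    Integrable fun u => |u| * gaussKernel t u := by
  convert (integrable_mul_exp_neg_mul_sq (b := 1 / (4 * t)) (by positivity)).abs using 2 with u
  rw [abs_mul, abs_of_pos (exp_pos _), gaussKernel]; ring_nf

lemma integral_abs_mul_gaussKernel (ht : 0 < t) : ∫ u, |u| * gaussKernel t u = 4 * t := by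
  have h := integral_mul_cexp_neg_mul_sq (b := ((1 / (4 * t) : ℝ) : ℂ)) (by simp; positivity)
  have h' : ∫ u in Ioi (0 : ℝ), u * gaussKernel t u = 2 * t := by
    rw [← Complex.ofReal_inj, ← integral_complex_ofReal]
    convert h using 1
    · push_cast [gaussKernel]
      congr 1 with u
      ring_nf
    · push_cast
      field_simp
      ring
  have h_abs (u : ℝ) : gaussKernel t |u| = gaussKernel t u := by simp [gaussKernel]
  have := integral_comp_abs (f := fun u => u * gaussKernel t u)
  simp only [h_abs, h'] at this
  linarith

lemma integrable_abs_add_one_mul_gaussKernel (ht : 0 < t) :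
    Integrable fun u => (|u| + 1) * gaussKernel t u :=
  ((integrable_abs_mul_gaussKernel ht).add (integrable_gaussKernel ht)).congr
    (ae_of_all _ fun u => by simp only [Pi.add_apply]; ring)

end gaussKernel

noncomputable def S1Kernel (t x ρ : ℝ) : ℝ := gaussKernel t (x - ρ) - gaussKernel t (x + ρ - 2)

noncomputable def S1KernelDeriv (t x ρ : ℝ) : ℝ :=
  -((x - ρ) / (2 * t)) * gaussKernel t (x - ρ) + (x + ρ - 2) / (2 * t) * gaussKernel t (x + ρ - 2)

lemma S1_eq (φ : ℝ → ℝ) (t r : ℝ) :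
    S1 φ t r = 1 / (r * √(4 * π * t)) * ∫ ρ in Ioi 1, S1Kernel t r ρ * (ρ * φ ρ) :=
  rfl

section S1Kernel

variable {t K : ℝ} {s : Set ℝ} {ψ : ℝ → ℝ}

lemma hasDerivAt_S1Kernel (t x ρ : ℝ) :
    HasDerivAt (fun x => S1Kernel t x ρ) (S1KernelDeriv t x ρ) x := by
  have h₁ := (hasDerivAt_gaussKernel t (x - ρ)).comp x ((hasDerivAt_id x).sub_const ρ)
  have h₂ := (hasDerivAt_gaussKernel t (x + ρ - 2)).comp x
    (((hasDerivAt_id x).add_const ρ).sub_const 2)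
  exact (h₁.sub h₂).congr_deriv (by rw [S1KernelDeriv]; ring)

lemma continuous_S1Kernel (t x : ℝ) : Continuous (S1Kernel t x) := by
  unfold S1Kernel gaussKernel; fun_prop

lemma continuous_S1KernelDeriv (t x : ℝ) : Continuous (S1KernelDeriv t x) := by
  unfold S1KernelDeriv gaussKernel; fun_prop

lemma integrable_S1Kernel (ht : 0 < t) (x : ℝ) : Integrable (S1Kernel t x) :=
  ((integrable_gaussKernel ht).comp_sub_left x).sub ((integrable_gaussKernel ht).comp_add_sub x 2)

lemma abs_S1KernelDeriv_le (ht : 0 < t) (x ρ : ℝ) :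
    |S1KernelDeriv t x ρ| ≤
      (|x - ρ| * gaussKernel t (x - ρ) + |x + ρ - 2| * gaussKernel t (x + ρ - 2)) / (2 * t) := by
  have h2t : 0 < 2 * t := by positivity
  unfold S1KernelDeriv
  refine (abs_add_le _ _).trans_eq ?_
  simp only [abs_mul, abs_neg, abs_div, abs_of_pos h2t, abs_of_pos (gaussKernel_pos _ _)]
  ring

lemma abs_mul_gaussKernel_le_of_abs_sub_le {u v : ℝ} (ht : 0 < t) (h : |u - v| ≤ 1) :
    |u| * gaussKernel t u ≤ rexp (1 / (4 * t)) * ((|v| + 1) * gaussKernel (2 * t) v) := by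
  have hu : |u| ≤ |v| + 1 := by
    have := abs_sub_abs_le_abs_sub u v
    linarith
  calc |u| * gaussKernel t u ≤ (|v| + 1) * (rexp (1 / (4 * t)) * gaussKernel (2 * t) v) :=
        mul_le_mul hu (gaussKernel_le_of_abs_sub_le ht h) (gaussKernel_pos _ _).le (by positivity)
    _ = _ := by ring

lemma abs_S1KernelDeriv_le_of_abs_sub_le {x x₀ : ℝ} (ht : 0 < t) (hx : |x - x₀| ≤ 1) (ρ : ℝ) :
    |S1KernelDeriv t x ρ| ≤ rexp (1 / (4 * t)) / (2 * t) *
      ((|x₀ - ρ| + 1) * gaussKernel (2 * t) (x₀ - ρ) +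
        (|x₀ + ρ - 2| + 1) * gaussKernel (2 * t) (x₀ + ρ - 2)) := by
  have h₁ := abs_mul_gaussKernel_le_of_abs_sub_le (u := x - ρ) (v := x₀ - ρ) ht
    (by rwa [sub_sub_sub_cancel_right])
  have h₂ := abs_mul_gaussKernel_le_of_abs_sub_le (u := x + ρ - 2) (v := x₀ + ρ - 2) ht
    (by rwa [show x + ρ - 2 - (x₀ + ρ - 2) = x - x₀ by ring])
  refine (abs_S1KernelDeriv_le ht x ρ).trans ?_
  rw [div_le_iff₀ (by positivity)]
  convert add_le_add h₁ h₂ using 1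
  field_simp

lemma hasDerivAt_integral_S1Kernel_mul (ht : 0 < t) (hs : MeasurableSet s)
    (hψ : AEStronglyMeasurable ψ (volume.restrict s)) (hψK : ∀ ρ ∈ s, |ψ ρ| ≤ K) (x₀ : ℝ) :
    HasDerivAt (fun x => ∫ ρ in s, S1Kernel t x ρ * ψ ρ)
      (∫ ρ in s, S1KernelDeriv t x₀ ρ * ψ ρ) x₀ := by
  have hψK' : ∀ᵐ ρ ∂volume.restrict s, ‖ψ ρ‖ ≤ K := (ae_restrict_iff' hs).2 (ae_of_all _ hψK)
  have hg := integrable_abs_add_one_mul_gaussKernel (t := 2 * t) (by positivity)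
  have h_bound : ∀ᵐ ρ ∂volume.restrict s, ∀ x ∈ Metric.ball x₀ 1,
      ‖S1KernelDeriv t x ρ * ψ ρ‖ ≤ rexp (1 / (4 * t)) / (2 * t) *
        ((|x₀ - ρ| + 1) * gaussKernel (2 * t) (x₀ - ρ) +
          (|x₀ + ρ - 2| + 1) * gaussKernel (2 * t) (x₀ + ρ - 2)) * K := by
    filter_upwards [hψK'] with ρ hρ x hx
    rw [norm_mul]
    exact mul_le_mul (abs_S1KernelDeriv_le_of_abs_sub_le ht (mem_ball_iff_norm.1 hx).le ρ) hρ
      (norm_nonneg _) (by unfold gaussKernel; positivity)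
  exact (hasDerivAt_integral_of_dominated_loc_of_deriv_le (Metric.ball_mem_nhds x₀ one_pos)
    (Eventually.of_forall fun x => (continuous_S1Kernel t x).aestronglyMeasurable.mul hψ)
    ((integrable_S1Kernel ht x₀).restrict.mul_bdd hψ hψK')
    ((continuous_S1KernelDeriv t x₀).aestronglyMeasurable.mul hψ) h_bound
    ((((hg.comp_sub_left x₀).add (hg.comp_add_sub x₀ 2)).const_mul _).mul_const K).restrict
    (ae_of_all _ fun ρ x _ => (hasDerivAt_S1Kernel t x ρ).mul_const (ψ ρ))).2

lemma S1Kernel_nonneg (ht : 0 ≤ t) {x ρ : ℝ} (hx : 1 ≤ x) (hρ : 1 ≤ ρ) : 0 ≤ S1Kernel t x ρ :=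
  sub_nonneg.2 <| gaussKernel_le_of_sq_le ht <| by
    nlinarith [mul_nonneg (sub_nonneg.2 hx) (sub_nonneg.2 hρ)]

lemma integral_S1Kernel_le (ht : 0 < t) {x : ℝ} (hx : 1 ≤ x) :
    ∫ ρ in Ioi 1, S1Kernel t x ρ ≤ 2 * (x - 1) := by
  have hG := integrable_gaussKernel ht
  have h₁ : ∫ ρ in Ioi 1, gaussKernel t (x - ρ) = ∫ u in Ioi (1 - x), gaussKernel t u := by
    simp_rw [← integral_Ioi_comp_sub, ← gaussKernel_neg t (_ - x), neg_sub]
  have h₂ : ∫ ρ in Ioi 1, gaussKernel t (x + ρ - 2) = ∫ u in Ioi (x - 1), gaussKernel t u := by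
    rw [show x - 1 = 1 - (2 - x) by ring, ← integral_Ioi_comp_sub]
    congr 1 with ρ
    ring_nf
  unfold S1Kernel
  rw [integral_sub (hG.comp_sub_left x).integrableOn (hG.comp_add_sub x 2).integrableOn, h₁, h₂,
    intervalIntegral.integral_Ioi_sub_Ioi hG.integrableOn (by linarith)]
  calc ∫ u in 1 - x..x - 1, gaussKernel t u
      ≤ ‖∫ u in 1 - x..x - 1, gaussKernel t u‖ := le_norm_self _
    _ ≤ 1 * |x - 1 - (1 - x)| := intervalIntegral.norm_integral_le_of_norm_le_const fun u _ => by
        rw [Real.norm_of_nonneg (gaussKernel_pos t u).le]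
        exact gaussKernel_le_one ht.le u
    _ = 2 * (x - 1) := by rw [abs_of_nonneg (by linarith)]; ring

lemma abs_integral_S1Kernel_mul_le (ht : 0 < t) {x : ℝ} (hx : 1 ≤ x)
    (hψK : ∀ ρ ∈ Ioi 1, |ψ ρ| ≤ K) :
    |∫ ρ in Ioi 1, S1Kernel t x ρ * ψ ρ| ≤ 2 * K * (x - 1) := by
  have hK : 0 ≤ K := (abs_nonneg _).trans (hψK 2 (by norm_num))
  have h_bound : ∀ᵐ ρ ∂volume.restrict (Ioi 1), ‖S1Kernel t x ρ * ψ ρ‖ ≤ K * S1Kernel t x ρ := by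
    refine (ae_restrict_iff' measurableSet_Ioi).2 (ae_of_all _ fun ρ hρ => ?_)
    have hk := S1Kernel_nonneg ht.le hx (le_of_lt hρ)
    rw [norm_mul, Real.norm_of_nonneg hk, mul_comm]
    exact mul_le_mul_of_nonneg_right (hψK ρ hρ) hk
  calc |∫ ρ in Ioi 1, S1Kernel t x ρ * ψ ρ|
      ≤ ∫ ρ in Ioi 1, K * S1Kernel t x ρ :=
        norm_integral_le_of_norm_le ((integrable_S1Kernel ht x).integrableOn.const_mul K) h_bound
    _ = K * ∫ ρ in Ioi 1, S1Kernel t x ρ := integral_const_mul _ _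
    _ ≤ K * (2 * (x - 1)) := mul_le_mul_of_nonneg_left (integral_S1Kernel_le ht hx) hK
    _ = 2 * K * (x - 1) := by ring

lemma abs_integral_S1KernelDeriv_mul_le (ht : 0 < t) (hK : 0 ≤ K) (hs : MeasurableSet s)
    (hψK : ∀ ρ ∈ s, |ψ ρ| ≤ K) (x : ℝ) :
    |∫ ρ in s, S1KernelDeriv t x ρ * ψ ρ| ≤ 4 * K := by
  have hh := integrable_abs_mul_gaussKernel ht
  set g : ℝ → ℝ := fun ρ =>
    K * ((|x - ρ| * gaussKernel t (x - ρ) + |x + ρ - 2| * gaussKernel t (x + ρ - 2)) / (2 * t))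
  have hg : Integrable g :=
    (((hh.comp_sub_left x).add (hh.comp_add_sub x 2)).div_const _).const_mul K
  have h_bound : ∀ᵐ ρ ∂volume.restrict s, ‖S1KernelDeriv t x ρ * ψ ρ‖ ≤ g ρ := by
    refine (ae_restrict_iff' hs).2 (ae_of_all _ fun ρ hρ => ?_)
    rw [norm_mul, mul_comm]
    exact mul_le_mul (hψK ρ hρ) (abs_S1KernelDeriv_le ht x ρ) (abs_nonneg _) hK
  calc |∫ ρ in s, S1KernelDeriv t x ρ * ψ ρ|
      ≤ ∫ ρ in s, g ρ := norm_integral_le_of_norm_le hg.integrableOn h_bound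
    _ ≤ ∫ ρ, g ρ := setIntegral_le_integral hg (ae_of_all _ fun ρ => by
        simp only [g, gaussKernel]; positivity)
    _ = 4 * K := by
      simp only [g]
      rw [integral_const_mul, integral_div, integral_add (hh.comp_sub_left x) (hh.comp_add_sub x 2),
        integral_sub_left_eq_self (fun u => |u| * gaussKernel t u),
        integral_comp_add_sub (fun u => |u| * gaussKernel t u), integral_abs_mul_gaussKernel ht]
      field_simp
      ring

end S1Kernel

lemma hasDerivAt_S1 {φ : ℝ → ℝ} (hφm : Measurable φ) {K : ℝ} (hφ : ∀ ρ, 1 ≤ ρ → |ρ * φ ρ| ≤ K)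
    {t r : ℝ} (ht : 0 < t) (hr : r ≠ 0) :
    HasDerivAt (S1 φ t) (-(1 / r) * S1 φ t r +
      1 / (r * √(4 * π * t)) * ∫ ρ in Ioi 1, S1KernelDeriv t r ρ * (ρ * φ ρ)) r := by
  set c := √(4 * π * t)
  have hc : c ≠ 0 := (sqrt_pos.2 (by positivity)).ne'
  have hI := hasDerivAt_integral_S1Kernel_mul ht measurableSet_Ioi
    (by fun_prop : Measurable fun ρ => ρ * φ ρ).aestronglyMeasurable
    (fun ρ hρ => hφ ρ (le_of_lt hρ)) r
  have hinv : HasDerivAt (fun x => 1 / (x * c)) (-(1 / r) * (1 / (r * c))) r := by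
    have h := ((hasDerivAt_id r).mul_const c).inv (mul_ne_zero hr hc)
    rw [show (fun x => 1 / (x * c)) = (fun x => id x * c)⁻¹ by ext; simp]
    exact h.congr_deriv (by simp only [id]; field_simp)
  exact (hinv.mul hI).congr_deriv (by rw [S1_eq]; ring)

theorem stmt_8 (φ : ℝ → ℝ) (hφm : Measurable φ) (K : ℝ)
    (hφ : ∀ ρ, 1 ≤ ρ → |ρ * φ ρ| ≤ K) :
    ∀ r t : ℝ, 1 ≤ r → 0 < t →
      |deriv (fun r' => S1 φ t r') r| ≤ 2 * K / Real.sqrt (π * t) := by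
  intro r t hr ht
  have hK : 0 ≤ K := (abs_nonneg _).trans (hφ 1 le_rfl)
  have hψK : ∀ ρ ∈ Ioi (1 : ℝ), |ρ * φ ρ| ≤ K := fun ρ hρ => hφ ρ (le_of_lt hρ)
  have hr₀ : 0 < r := by linarith
  have hs : 0 < √(π * t) := sqrt_pos.2 (by positivity)
  have hc : √(4 * π * t) = 2 * √(π * t) := by
    rw [mul_assoc, sqrt_mul (by norm_num), show (4 : ℝ) = 2 ^ 2 by norm_num, sqrt_sq zero_le_two]
  set I := ∫ ρ in Ioi 1, S1Kernel t r ρ * (ρ * φ ρ)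
  set J := ∫ ρ in Ioi 1, S1KernelDeriv t r ρ * (ρ * φ ρ)
  have hI : |I| ≤ 2 * K * (r - 1) := abs_integral_S1Kernel_mul_le ht hr hψK
  have hJ : |J| ≤ 4 * K := abs_integral_S1KernelDeriv_mul_le ht hK measurableSet_Ioi hψK r
  have hJI : |J - I / r| ≤ 4 * K + 2 * K * (r - 1) / r := by
    refine (abs_sub _ _).trans (add_le_add hJ ?_)
    rw [abs_div, abs_of_pos hr₀]
    gcongr
  rw [(hasDerivAt_S1 hφm hφ ht hr₀.ne').deriv, S1_eq, hc,
    show -(1 / r) * (1 / (r * (2 * √(π * t))) * I) + 1 / (r * (2 * √(π * t))) * J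
      = (J - I / r) / (2 * r * √(π * t)) by field_simp; ring,
    abs_div, abs_of_pos (by positivity : 0 < 2 * r * √(π * t)), div_le_div_iff₀ (by positivity) hs]
  calc |J - I / r| * √(π * t) ≤ (4 * K + 2 * K * (r - 1) / r) * √(π * t) := by gcongr
    _ ≤ 2 * K * (2 * r * √(π * t)) := by
      rw [← sub_nonneg]
      have : 0 ≤ 2 * K * (2 * r - 1) * (r - 1) / r * √(π * t) := by
        have : 0 ≤ r - 1 := by linarith
        have : 0 ≤ 2 * r - 1 := by linarith
        positivity
      convert this using 1
      field_simp
      ring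
end

section
/- Let T > 0 and let g : (0,T) → ℝ be continuous with M := sup_{τ∈(0,T)} |√τ g(τ)| < ∞. For r ≥ 1, t ∈ (0,T), ε > 0 define D̃_ε(r,t) = (2/(r√π)) ∫₀ᵗ g(s) ∫₀^{(r−1)√ε/(2√(t−s))} e^{-z²} dz ds − (2/(r√π)) ∫₀ᵗ (∫₀ˢ e^{σ−s} g(σ) dσ) ∫₀^{(r−1)√ε/(2√(t−s))} e^{-z²} dz ds. Then |D̃_ε(r,t)| ≤ √(επ)(1+t) M for all r ≥ 1 and t ∈ (0,T). -/
/-!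
Bound the inner Gaussian integral by its length, `|∫₀^L e^{-z²}| ≤ L`, and the two densities by
`|g s| ≤ M / √s` and `|∫₀ˢ e^{σ-s} g σ dσ| ≤ 2M√s`. Both terms of `D̃_ε` are then controlled by
`∫₀ᵗ ds / (√s √(t-s)) = π`, whose antiderivative is `arcsin (2s/t - 1)`, and by
`∫₀ᵗ s ds / (√s √(t-s)) = πt/2`, which follows from it by the symmetry `s ↦ t - s`.
The prefactor leaves `(r - 1) / r ≤ 1`.
-/

open Real MeasureTheory Set intervalIntegral

lemma abs_intervalIntegral_le_of_forall_Ioo {f g : ℝ → ℝ} {a b : ℝ} (hab : a ≤ b)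
    (hg : IntervalIntegrable g volume a b) (h : ∀ x ∈ Ioo a b, |f x| ≤ g x) :
    |∫ x in a..b, f x| ≤ ∫ x in a..b, g x := by
  rw [integral_of_le hab, integral_of_le hab, integral_Ioc_eq_integral_Ioo,
    integral_Ioc_eq_integral_Ioo]
  exact (Real.norm_eq_abs _).symm.trans_le <| norm_integral_le_of_norm_le
    (hg.1.mono_set Ioo_subset_Ioc_self)
    (ae_restrict_of_forall_mem measurableSet_Ioo h)

lemma abs_integral_exp_neg_sq_le (a : ℝ) : |∫ z in (0:ℝ)..a, exp (-z ^ 2)| ≤ |a| := by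
  simpa using norm_integral_le_of_norm_le_const (a := 0) (b := a) (C := 1)
    (f := fun z => exp (-z ^ 2)) fun z _ => by simp [abs_of_pos (exp_pos _), sq_nonneg]

lemma abs_le_mul_inv_sqrt {σ x M : ℝ} (hσ : 0 < σ) (h : |√σ * x| ≤ M) : |x| ≤ M * (√σ)⁻¹ := by
  rw [abs_mul, abs_of_pos (sqrt_pos.2 hσ)] at h
  rw [le_mul_inv_iff₀ (sqrt_pos.2 hσ)]
  linarith

lemma hasDerivAt_two_mul_sqrt {x : ℝ} (hx : 0 < x) :
    HasDerivAt (fun y => 2 * √y) (√x)⁻¹ x := by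
  refine ((hasDerivAt_sqrt hx.ne').const_mul 2).congr_deriv ?_
  field_simp

lemma intervalIntegrable_inv_sqrt {s : ℝ} (hs : 0 ≤ s) :
    IntervalIntegrable (fun x => (√x)⁻¹) volume 0 s :=
  (intervalIntegrable_iff_integrableOn_Ioc_of_le hs).2 <|
    integrableOn_deriv_of_nonneg (by fun_prop) (fun _ hx => hasDerivAt_two_mul_sqrt hx.1)
      fun _ _ => by positivity

lemma integral_inv_sqrt {s : ℝ} (hs : 0 ≤ s) : ∫ x in (0:ℝ)..s, (√x)⁻¹ = 2 * √s := by
  rw [integral_eq_sub_of_hasDerivAt_of_le hs (by fun_prop)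
    (fun _ hx => hasDerivAt_two_mul_sqrt hx.1) (intervalIntegrable_inv_sqrt hs)]
  simp

lemma hasDerivAt_arcsin_two_mul_div_sub_one {t s : ℝ} (hs : s ∈ Ioo 0 t) :
    HasDerivAt (fun x => arcsin (2 * x / t - 1)) (√s * √(t - s))⁻¹ s := by
  obtain ⟨hs0, hst⟩ := hs
  have ht : 0 < t := hs0.trans hst
  have hsqrt : √(1 - (2 * s / t - 1) ^ 2) = 2 * √s * √(t - s) / t := by
    rw [show 1 - (2 * s / t - 1) ^ 2 = (2 * √s * √(t - s) / t) ^ 2 by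
      field_simp
      rw [sq_sqrt hs0.le, sq_sqrt (by linarith)]
      ring]
    exact sqrt_sq (by positivity)
  have hlo : 2 * s / t - 1 ≠ -1 := by
    intro h; field_simp at h; linarith
  have hhi : 2 * s / t - 1 ≠ 1 := by
    intro h; field_simp at h; linarith
  refine ((hasDerivAt_arcsin hlo hhi).comp s
    ((((hasDerivAt_id s).const_mul 2).div_const t).sub_const 1)).congr_deriv ?_
  rw [hsqrt]
  field_simp

lemma intervalIntegrable_inv_sqrt_mul_sqrt_sub {t : ℝ} (ht : 0 ≤ t) :
    IntervalIntegrable (fun s => (√s * √(t - s))⁻¹) volume 0 t :=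
  (intervalIntegrable_iff_integrableOn_Ioc_of_le ht).2 <|
    integrableOn_deriv_of_nonneg (by fun_prop) (fun _ => hasDerivAt_arcsin_two_mul_div_sub_one)
      fun _ _ => by positivity

lemma integral_inv_sqrt_mul_sqrt_sub {t : ℝ} (ht : 0 < t) :
    ∫ s in (0:ℝ)..t, (√s * √(t - s))⁻¹ = π := by
  rw [integral_eq_sub_of_hasDerivAt_of_le ht.le (by fun_prop)
    (fun _ hs => hasDerivAt_arcsin_two_mul_div_sub_one hs)
    (intervalIntegrable_inv_sqrt_mul_sqrt_sub ht.le)]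
  norm_num [ht.ne']

lemma integral_mul_inv_sqrt_mul_sqrt_sub {t : ℝ} (ht : 0 < t) :
    ∫ s in (0:ℝ)..t, s * (√s * √(t - s))⁻¹ = π * t / 2 := by
  have hw := intervalIntegrable_inv_sqrt_mul_sqrt_sub ht.le
  have hsym : ∫ s in (0:ℝ)..t, (t - s) * (√s * √(t - s))⁻¹ =
      ∫ s in (0:ℝ)..t, s * (√s * √(t - s))⁻¹ := by
    have := integral_comp_sub_left (fun s => s * (√s * √(t - s))⁻¹) t (a := 0) (b := t)
    simp only [sub_sub_cancel, sub_self, sub_zero] at this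
    rw [← this]
    congr 1 with s
    ring
  have hsplit : ∫ s in (0:ℝ)..t, t * (√s * √(t - s))⁻¹ =
      (∫ s in (0:ℝ)..t, s * (√s * √(t - s))⁻¹) + ∫ s in (0:ℝ)..t, (t - s) * (√s * √(t - s))⁻¹ := by
    rw [← integral_add (hw.continuousOn_mul (by fun_prop)) (hw.continuousOn_mul (by fun_prop))]
    congr 1 with s
    ring
  rw [intervalIntegral.integral_const_mul, integral_inv_sqrt_mul_sqrt_sub ht, hsym] at hsplit
  linarith

lemma abs_integral_exp_sub_mul_le {g : ℝ → ℝ} {s M : ℝ} (hs : 0 ≤ s)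
    (hM : ∀ σ ∈ Ioo 0 s, |√σ * g σ| ≤ M) :
    |∫ σ in (0:ℝ)..s, exp (σ - s) * g σ| ≤ 2 * M * √s := by
  calc |∫ σ in (0:ℝ)..s, exp (σ - s) * g σ|
      ≤ ∫ σ in (0:ℝ)..s, M * (√σ)⁻¹ := by
        refine abs_intervalIntegral_le_of_forall_Ioo hs
          ((intervalIntegrable_inv_sqrt hs).const_mul M) fun σ hσ => ?_
        have hexp : exp (σ - s) ≤ 1 := exp_le_one_iff.2 (by linarith [hσ.2])
        rw [abs_mul, abs_of_pos (exp_pos _)]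
        calc exp (σ - s) * |g σ| ≤ 1 * (M * (√σ)⁻¹) :=
              mul_le_mul hexp (abs_le_mul_inv_sqrt hσ.1 (hM σ hσ)) (abs_nonneg _) zero_le_one
          _ = M * (√σ)⁻¹ := one_mul _
    _ = 2 * M * √s := by rw [intervalIntegral.integral_const_mul, integral_inv_sqrt hs]; ring

lemma nonneg_of_forall_Ioo_abs_le {f : ℝ → ℝ} {t M : ℝ} (ht : 0 < t)
    (hM : ∀ s ∈ Ioo 0 t, |f s| ≤ M) : 0 ≤ M :=
  (abs_nonneg _).trans (hM (t / 2) ⟨by linarith, by linarith⟩)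

lemma abs_integral_mul_le_of_sqrt_mul_le {f k : ℝ → ℝ} {t c M : ℝ} (ht : 0 < t)
    (hM : ∀ s ∈ Ioo 0 t, |√s * f s| ≤ M) (hk : ∀ s, |k s| ≤ c * (√(t - s))⁻¹) :
    |∫ s in (0:ℝ)..t, f s * k s| ≤ M * c * π := by
  have hM0 := nonneg_of_forall_Ioo_abs_le ht hM
  calc _ ≤ ∫ s in (0:ℝ)..t, M * c * (√s * √(t - s))⁻¹ := by
        refine abs_intervalIntegral_le_of_forall_Ioo ht.le
          ((intervalIntegrable_inv_sqrt_mul_sqrt_sub ht.le).const_mul _) fun s hs => ?_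
        rw [abs_mul]
        refine (mul_le_mul (abs_le_mul_inv_sqrt hs.1 (hM s hs)) (hk s) (abs_nonneg _)
          (by positivity)).trans_eq ?_
        ring
    _ = M * c * π := by
        rw [intervalIntegral.integral_const_mul, integral_inv_sqrt_mul_sqrt_sub ht]

lemma abs_integral_integral_exp_sub_mul_mul_le {g k : ℝ → ℝ} {t c M : ℝ} (ht : 0 < t)
    (hM : ∀ s ∈ Ioo 0 t, |√s * g s| ≤ M) (hk : ∀ s, |k s| ≤ c * (√(t - s))⁻¹) :
    |∫ s in (0:ℝ)..t, (∫ σ in (0:ℝ)..s, exp (σ - s) * g σ) * k s| ≤ M * c * π * t := by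
  have hM0 := nonneg_of_forall_Ioo_abs_le ht hM
  calc _ ≤ ∫ s in (0:ℝ)..t, 2 * M * c * (s * (√s * √(t - s))⁻¹) := by
        refine abs_intervalIntegral_le_of_forall_Ioo ht.le
          (((intervalIntegrable_inv_sqrt_mul_sqrt_sub ht.le).continuousOn_mul
            (by fun_prop)).const_mul _) fun s hs => ?_
        have hgs := abs_integral_exp_sub_mul_le hs.1.le fun σ hσ => hM σ ⟨hσ.1, hσ.2.trans hs.2⟩
        rw [abs_mul]
        refine (mul_le_mul hgs (hk s) (abs_nonneg _) (by positivity)).trans_eq ?_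
        rw [mul_inv, ← mul_assoc s, ← div_eq_mul_inv s, div_sqrt]
        ring
    _ = M * c * π * t := by
        rw [intervalIntegral.integral_const_mul, integral_mul_inv_sqrt_mul_sqrt_sub ht]
        ring

theorem stmt_11_general (T : ℝ) (g : ℝ → ℝ) (M : ℝ)
    (hM : ∀ τ ∈ Set.Ioo (0:ℝ) T, |Real.sqrt τ * g τ| ≤ M) (ε : ℝ) :
    ∀ r t : ℝ, 1 ≤ r → t ∈ Set.Ioo (0:ℝ) T →
      |(2 / (r * Real.sqrt π)) *
          (∫ s in (0:ℝ)..t, g s *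
            ∫ z in (0:ℝ)..((r - 1) * Real.sqrt ε / (2 * Real.sqrt (t - s))), Real.exp (-z ^ 2))
        - (2 / (r * Real.sqrt π)) *
          (∫ s in (0:ℝ)..t, (∫ σ in (0:ℝ)..s, Real.exp (σ - s) * g σ) *
            ∫ z in (0:ℝ)..((r - 1) * Real.sqrt ε / (2 * Real.sqrt (t - s))), Real.exp (-z ^ 2))|
        ≤ Real.sqrt (ε * π) * (1 + t) * M := by
  intro r t hr ⟨ht0, htT⟩
  have hMt : ∀ s ∈ Ioo 0 t, |√s * g s| ≤ M := fun s hs => hM s ⟨hs.1, hs.2.trans htT⟩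
  have hM0 := nonneg_of_forall_Ioo_abs_le ht0 hMt
  have hk (s : ℝ) : |∫ z in (0:ℝ)..((r - 1) * √ε / (2 * √(t - s))), exp (-z ^ 2)| ≤
      (r - 1) * √ε / 2 * (√(t - s))⁻¹ := by
    refine (abs_integral_exp_neg_sq_le _).trans_eq ?_
    rw [abs_of_nonneg (div_nonneg (mul_nonneg (by linarith) (sqrt_nonneg ε)) (by positivity))]
    ring
  have hA := abs_integral_mul_le_of_sqrt_mul_le ht0 hMt hk
  have hB := abs_integral_integral_exp_sub_mul_mul_le ht0 hMt hk
  have hr0 : 0 < r := by linarith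
  calc _ ≤ 2 / (r * √π) * (M * ((r - 1) * √ε / 2) * π) +
        2 / (r * √π) * (M * ((r - 1) * √ε / 2) * π * t) := by
        rw [← mul_sub, abs_mul, abs_of_pos (by positivity), ← mul_add]
        exact mul_le_mul_of_nonneg_left ((abs_sub _ _).trans (add_le_add hA hB)) (by positivity)
    _ = (r - 1) / r * (√(ε * π) * (1 + t) * M) := by
        rw [sqrt_mul' _ pi_pos.le]
        field_simp
        rw [sq_sqrt pi_pos.le]
        ring
    _ ≤ √(ε * π) * (1 + t) * M :=
        mul_le_of_le_one_left (by positivity) ((div_le_one hr0).2 (by linarith))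

theorem stmt_11 (T : ℝ) (hT : 0 < T) (g : ℝ → ℝ)
    (hg : ContinuousOn g (Set.Ioo 0 T)) (M : ℝ)
    (hM : ∀ τ ∈ Set.Ioo (0:ℝ) T, |Real.sqrt τ * g τ| ≤ M) (ε : ℝ) (hε : 0 < ε) :
    ∀ r t : ℝ, 1 ≤ r → t ∈ Set.Ioo (0:ℝ) T →
      |(2 / (r * Real.sqrt π)) *
          (∫ s in (0:ℝ)..t, g s *
            ∫ z in (0:ℝ)..((r - 1) * Real.sqrt ε / (2 * Real.sqrt (t - s))), Real.exp (-z ^ 2))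
        - (2 / (r * Real.sqrt π)) *
          (∫ s in (0:ℝ)..t, (∫ σ in (0:ℝ)..s, Real.exp (σ - s) * g σ) *
            ∫ z in (0:ℝ)..((r - 1) * Real.sqrt ε / (2 * Real.sqrt (t - s))), Real.exp (-z ^ 2))|
        ≤ Real.sqrt (ε * π) * (1 + t) * M :=
  stmt_11_general T g M hM ε
end
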